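/- Let m = p_1^{r_1} ⋯ p_k^{r_k} be the prime factorization of an integer m ≥ 2, and let a be an integer with gcd(a, m) = 1. For 1 ≤ i ≤ k, let d_i = λ(m)/λ(p_i^{r_i}), m_i = m/p_i^{r_i}, and let m_i' be an integer with m_i² · m_i' ≡ 1 (mod p_i^{r_i}). Then C_m(a) ≡ Σ_{i=1}^{k} m_i · m_i' · d_i · C_{p_i^{r_i}}(a) (mod m). -/

import Mathlib

/-- The Carmichael function `λ(m)`: the smallest positive integer `n` such that
`a ^ n ≡ 1 (mod m)` for every integer `a` coprime to `m`. -/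
noncomputable def carmichael (m : ℕ) : ℕ :=
  sInf {n : ℕ | 0 < n ∧ ∀ a : ℤ, Int.gcd a m = 1 → a ^ n ≡ 1 [ZMOD (m : ℤ)]}

/-- The Carmichael quotient `C_m(a) = (a^{λ(m)} - 1) / m`. -/
noncomputable def carQuot (m : ℕ) (a : ℤ) : ℤ := (a ^ carmichael m - 1) / m

/-!
For coprime `a`, the condition `a ^ n ≡ 1 (mod m)` only depends on the class of `a` in
`(ZMod m)ˣ`, so `λ(m)` is the exponent of that group; the surjection `(ZMod m)ˣ → (ZMod q)ˣ`
for `q ∣ m` then gives `λ(q) ∣ λ(m)`.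

Write `m = q s` with `q = p_j ^ r_j` and `a ^ λ(q) = 1 + q C_q(a)`. Raising to the power
`d = λ(m)/λ(q)` and expanding modulo `q²` gives `q s C_m(a) ≡ d q C_q(a)`, hence
`s C_m(a) ≡ d C_q(a) (mod q)`; multiplying by `s s'` with `s² s' ≡ 1` isolates `C_m(a)`
modulo `q`.
All other summands vanish modulo `q`, and the Chinese remainder theorem glues the congruences.
-/

theorem forall_coprime_pow_modEq_one_iff (m n : ℕ) :
    (∀ a : ℤ, Int.gcd a m = 1 → a ^ n ≡ 1 [ZMOD (m : ℤ)]) ↔ ∀ u : (ZMod m)ˣ, u ^ n = 1 := by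
  constructor
  · intro h u
    obtain ⟨a, ha⟩ := ZMod.intCast_surjective (u : ZMod m)
    have hcop : IsCoprime (m : ℤ) a := (ZMod.coe_int_isUnit_iff_isCoprime a m).1 (ha ▸ u.isUnit)
    have hpow := h a (Int.isCoprime_iff_gcd_eq_one.1 hcop.symm)
    rw [← ZMod.intCast_eq_intCast_iff] at hpow
    ext
    push_cast at hpow ⊢
    rwa [← ha]
  · intro h a ha
    have hu := h (ZMod.unitOfIsCoprime a (Int.isCoprime_iff_gcd_eq_one.2 ha))
    rw [← ZMod.intCast_eq_intCast_iff]
    simpa using congrArg Units.val hu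

theorem carmichael_eq_exponent (m : ℕ) [NeZero m] :
    carmichael m = Monoid.exponent (ZMod m)ˣ := by
  have hmem : ∀ n, n ∈ {n : ℕ | 0 < n ∧ ∀ a : ℤ, Int.gcd a m = 1 → a ^ n ≡ 1 [ZMOD (m : ℤ)]} ↔
      0 < n ∧ Monoid.exponent (ZMod m)ˣ ∣ n := fun n => by
    rw [Set.mem_ofPred_eq, forall_coprime_pow_modEq_one_iff,
      Monoid.exponent_dvd_iff_forall_pow_eq_one]
  have hexp_mem := (hmem _).2 ⟨Nat.pos_of_ne_zero Monoid.exponent_ne_zero_of_finite, dvd_rfl⟩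
  refine le_antisymm (Nat.sInf_le hexp_mem) (le_csInf ⟨_, hexp_mem⟩ fun n hn => ?_)
  obtain ⟨hn0, hdvd⟩ := (hmem n).1 hn
  exact Nat.le_of_dvd hn0 hdvd

theorem pow_carmichael_modEq_one {m : ℕ} [NeZero m] {a : ℤ} (ha : Int.gcd a m = 1) :
    a ^ carmichael m ≡ 1 [ZMOD (m : ℤ)] :=
  (forall_coprime_pow_modEq_one_iff m _).2
    (fun u => by rw [carmichael_eq_exponent]; exact Monoid.pow_exponent_eq_one u) a ha

theorem carmichael_dvd_carmichael {q m : ℕ} [NeZero m] (h : q ∣ m) :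
    carmichael q ∣ carmichael m := by
  have : NeZero q := ⟨fun hq => NeZero.ne m (Nat.eq_zero_of_zero_dvd (hq ▸ h))⟩
  rw [carmichael_eq_exponent, carmichael_eq_exponent]
  exact MonoidHom.exponent_dvd (ZMod.unitsMap_surjective h)

theorem mul_carQuot {m : ℕ} [NeZero m] {a : ℤ} (ha : Int.gcd a m = 1) :
    (m : ℤ) * carQuot m a = a ^ carmichael m - 1 :=
  Int.mul_ediv_cancel' (pow_carmichael_modEq_one ha).symm.dvd

theorem div_mul_carQuot_modEq {q m : ℕ} [NeZero m] (hqm : q ∣ m) {a : ℤ} (ha : Int.gcd a m = 1) :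
    ((m / q : ℕ) : ℤ) * carQuot m a ≡
      ((carmichael m / carmichael q : ℕ) : ℤ) * carQuot q a [ZMOD (q : ℤ)] := by
  have : NeZero q := ⟨fun hq => NeZero.ne m (Nat.eq_zero_of_zero_dvd (hq ▸ hqm))⟩
  have haq : Int.gcd a q = 1 := Int.isCoprime_iff_gcd_eq_one.1 <|
    (Int.isCoprime_iff_gcd_eq_one.2 ha).of_isCoprime_of_dvd_right (Int.natCast_dvd_natCast.2 hqm)
  set d := carmichael m / carmichael q
  set C := carQuot q a
  have hm : ((m : ℕ) : ℤ) = q * (m / q : ℕ) := by exact_mod_cast (Nat.mul_div_cancel' hqm).symm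
  have hpow : a ^ carmichael m = (1 + q * C) ^ d := by
    rw [mul_carQuot haq, add_sub_cancel, ← pow_mul,
      Nat.mul_div_cancel' (carmichael_dvd_carmichael hqm)]
  have hbinom : (q : ℤ) * q ∣ (1 + q * C) ^ d - 1 - d * (q * C) := by
    have h := sq_dvd_add_pow_sub_sub (q * C : ℤ) 1 d
    simp only [one_pow, one_mul, sq] at h
    refine (mul_dvd_mul (dvd_mul_right _ C) (dvd_mul_right _ C)).trans ?_
    convert h using 1
    ring
  have hmC : (q : ℤ) * (((m / q : ℕ) : ℤ) * carQuot m a) = (1 + q * C) ^ d - 1 := by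
    rw [← mul_assoc, ← hm, mul_carQuot ha, hpow]
  refine Int.ModEq.mul_left_cancel' (NeZero.ne (q : ℤ)) (Int.modEq_iff_dvd.2 ?_)
  rw [hmC, show (q : ℤ) * (d * C) - ((1 + q * C) ^ d - 1) = -((1 + q * C) ^ d - 1 - d * (q * C))
    by ring]
  exact dvd_neg.2 hbinom

theorem carQuot_modEq_of_sq_mul_modEq_one {q m : ℕ} [NeZero m] (hqm : q ∣ m) {a : ℤ}
    (ha : Int.gcd a m = 1) {s' : ℤ} (hs' : ((m / q : ℕ) : ℤ) ^ 2 * s' ≡ 1 [ZMOD (q : ℤ)]) :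
    carQuot m a ≡ ((m / q : ℕ) : ℤ) * s' * ((carmichael m / carmichael q : ℕ) : ℤ) * carQuot q a
      [ZMOD (q : ℤ)] := by
  set s : ℤ := ((m / q : ℕ) : ℤ)
  calc carQuot m a = 1 * carQuot m a := (one_mul _).symm
    _ ≡ s ^ 2 * s' * carQuot m a [ZMOD (q : ℤ)] := hs'.symm.mul_right _
    _ = s * s' * (s * carQuot m a) := by ring
    _ ≡ s * s' * (((carmichael m / carmichael q : ℕ) : ℤ) * carQuot q a) [ZMOD (q : ℤ)] :=
      (div_mul_carQuot_modEq hqm ha).mul_left _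
    _ = _ := by ring

theorem stmt12_general (m : ℕ) (k : ℕ) (p r : Fin k → ℕ)
    (hp : ∀ i, (p i).Prime) (hinj : Function.Injective p)
    (hfac : m = ∏ i, p i ^ r i)
    (a : ℤ) (ha : Int.gcd a m = 1)
    (m' : Fin k → ℤ)
    (hm' : ∀ i, ((m / p i ^ r i : ℕ) : ℤ) ^ 2 * m' i ≡ 1 [ZMOD ((p i ^ r i : ℕ) : ℤ)]) :
    carQuot m a ≡
      ∑ i, ((m / p i ^ r i : ℕ) : ℤ) * m' i *
        ((carmichael m / carmichael (p i ^ r i) : ℕ) : ℤ) *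
          carQuot (p i ^ r i) a [ZMOD (m : ℤ)] := by
  have : NeZero m := ⟨hfac ▸ Finset.prod_ne_zero_iff.2 fun i _ => pow_ne_zero _ (hp i).ne_zero⟩
  have hcop : Pairwise fun i j => Nat.Coprime (p i ^ r i) (p j ^ r j) := fun i j hij =>
    Nat.Coprime.pow _ _ ((Nat.coprime_primes (hp i) (hp j)).2 (hinj.ne hij))
  have hdvd : ∀ i, p i ^ r i ∣ m := fun i => hfac ▸ Finset.dvd_prod_of_mem _ (Finset.mem_univ i)
  have hdvd_div : ∀ i j, i ≠ j → p j ^ r j ∣ m / p i ^ r i := fun i j hij =>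
    (hcop hij).symm.dvd_of_dvd_mul_left (by rw [Nat.mul_div_cancel' (hdvd i)]; exact hdvd j)
  have hm : (m : ℤ) = ∏ i, ((p i ^ r i : ℕ) : ℤ) := by rw [hfac]; push_cast; rfl
  rw [hm]
  refine (Int.modEq_iff_dvd.2 (Fintype.prod_dvd_of_coprime
    (fun i j hij => Nat.isCoprime_iff_coprime.2 (hcop hij)) fun j => Int.ModEq.dvd ?_))
  refine (carQuot_modEq_of_sq_mul_modEq_one (hdvd j) ha (hm' j)).trans (Int.ModEq.symm ?_)
  refine Int.sum_modEq_single (absurd (Finset.mem_univ j)) fun i _ hij => ?_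
  exact Int.modEq_zero_iff_dvd.2 <|
    ((Int.natCast_dvd_natCast.2 (hdvd_div i j hij)).mul_right _ |>.mul_right _).mul_right _

theorem stmt12 (m : ℕ) (hm : 2 ≤ m) (k : ℕ) (p r : Fin k → ℕ)
    (hp : ∀ i, (p i).Prime) (hr : ∀ i, 1 ≤ r i) (hinj : Function.Injective p)
    (hfac : m = ∏ i, p i ^ r i)
    (a : ℤ) (ha : Int.gcd a m = 1)
    (m' : Fin k → ℤ)
    (hm' : ∀ i, ((m / p i ^ r i : ℕ) : ℤ) ^ 2 * m' i ≡ 1 [ZMOD ((p i ^ r i : ℕ) : ℤ)]) :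
    carQuot m a ≡
      ∑ i, ((m / p i ^ r i : ℕ) : ℤ) * m' i *
        ((carmichael m / carmichael (p i ^ r i) : ℕ) : ℤ) *
          carQuot (p i ^ r i) a [ZMOD (m : ℤ)] :=
  stmt12_general m k p r hp hinj hfac a ha m' hm'
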